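/- Let $\mathcal{A} \subseteq \mathcal{P}[n]$, let $U \subseteq [n]$ have even order, let $v \in [n] - U$, and let $f : U \to U$ be a pairing function. If $\mathcal{C}_{U,v,f}(\mathcal{A}) \neq \mathcal{A}$, then $\sum_{A \in \mathcal{C}_{U,v,f}(\mathcal{A})} |A| > \sum_{A \in \mathcal{A}} |A|$. -/

import Mathlib

/-!
Write `C` for the compression. A member `A` of `𝓐` with `C(A) ∈ 𝓐` survives (`C(A)` contains `v`,
so `C` fixes it), and a member with `C(A) ∉ 𝓐` is replaced by `C(A)`. For the latter `v ∉ A`, so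
`C(A)` has one more element than `A`, and distinct such `A` have distinct images, because `A` is
recovered from `C(A)` by deleting `v` and applying the involution `f` on `U`. The family changes
only if some member is replaced, so the total size strictly increases.
-/

open Finset

/-- A family of finite sets is intersecting if any two members meet. -/
def IsIntersecting (𝓑 : Finset (Finset ℕ)) : Prop :=
  ∀ A ∈ 𝓑, ∀ B ∈ 𝓑, (A ∩ B).Nonempty

instance : DecidablePred IsIntersecting :=
  fun 𝓑 => decidable_of_iff (∀ A ∈ 𝓑, ∀ B ∈ 𝓑, (A ∩ B).Nonempty) Iff.rfl

/-- A family is `t`-intersecting if any two members meet in at least `t` elements. -/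
def TIntersecting (t : ℕ) (𝓐 : Finset (Finset ℕ)) : Prop :=
  ∀ A ∈ 𝓐, ∀ B ∈ 𝓐, t ≤ (A ∩ B).card

/-- The probability that the p-random subfamily of `𝓐` is intersecting. -/
noncomputable def probInter (p : ℝ) (𝓐 : Finset (Finset ℕ)) : ℝ :=
  ∑ 𝓑 ∈ 𝓐.powerset.filter IsIntersecting,
    p ^ 𝓑.card * (1 - p) ^ (𝓐.card - 𝓑.card)

/-- The number of intersecting subfamilies of `𝓐` of order `m`. -/
def numInter (𝓐 : Finset (Finset ℕ)) (m : ℕ) : ℕ :=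
  ((𝓐.powerset.filter IsIntersecting).filter (fun 𝓑 => 𝓑.card = m)).card

/-- `[n]^{(≥ r)}`: all subsets of `[n] = {1,…,n}` of size at least `r`. -/
def atLeast (n r : ℕ) : Finset (Finset ℕ) :=
  (Finset.Icc 1 n).powerset.filter (fun A => r ≤ A.card)

/-- `[n]^{(r)}`: all subsets of `[n] = {1,…,n}` of size exactly `r`. -/
def uniformFam (n r : ℕ) : Finset (Finset ℕ) :=
  Finset.powersetCard r (Finset.Icc 1 n)

/-- The `ij`-compression of a set. -/
def setCompress (i j : ℕ) (A : Finset ℕ) : Finset ℕ :=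
  if j ∈ A ∧ i ∉ A then insert i (A.erase j) else A

/-- The `ij`-compression of a family. -/
def famCompress (i j : ℕ) (𝓐 : Finset (Finset ℕ)) : Finset (Finset ℕ) :=
  𝓐.image (setCompress i j) ∪ 𝓐.filter (fun A => setCompress i j A ∈ 𝓐)

/-- A family is left-compressed if it is `ij`-compressed for all `i < j` in `[n]`. -/
def LeftCompressed (n : ℕ) (𝓐 : Finset (Finset ℕ)) : Prop :=
  ∀ i j : ℕ, 1 ≤ i → i < j → j ≤ n → famCompress i j 𝓐 = 𝓐

/-- The `UV`-compression of a set. -/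
def setUV (U V A : Finset ℕ) : Finset ℕ :=
  if V ⊆ A ∧ Disjoint U A then (A ∪ U) \ V else A

/-- The `UV`-compression of a family. -/
def famUV (U V : Finset ℕ) (𝓐 : Finset (Finset ℕ)) : Finset (Finset ℕ) :=
  𝓐.image (setUV U V) ∪ 𝓐.filter (fun A => setUV U V A ∈ 𝓐)

/-- `f` is a pairing function on `U`: an involution on `U` with no fixed point. -/
def IsPairing (f : ℕ → ℕ) (U : Finset ℕ) : Prop :=
  (∀ x ∈ U, f x ∈ U) ∧ (∀ x ∈ U, f (f x) = x) ∧ (∀ x ∈ U, f x ≠ x)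

/-- The `(U,v,f)`-compression of a set. -/
def setUvf (U : Finset ℕ) (v : ℕ) (f : ℕ → ℕ) (A : Finset ℕ) : Finset ℕ :=
  if v ∈ A then A else (A ∩ U).image f ∪ {v} ∪ (A \ U)

/-- The `(U,v,f)`-compression of a family. -/
def famUvf (U : Finset ℕ) (v : ℕ) (f : ℕ → ℕ) (𝓐 : Finset (Finset ℕ)) : Finset (Finset ℕ) :=
  𝓐.image (setUvf U v f) ∪ 𝓐.filter (fun A => setUvf U v f A ∈ 𝓐)

section Compression

variable {α M : Type*} [DecidableEq α] [AddCommMonoid M] [PartialOrder M]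
  [IsOrderedCancelAddMonoid M]

theorem sum_lt_sum_image_union_filter {g : α → α} {w : α → M} {𝓐 : Finset α}
    (hidem : ∀ a, g (g a) = g a) (hinj : Set.InjOn g {a | g a ≠ a})
    (hw : ∀ a, g a ≠ a → w a < w (g a))
    (hne : 𝓐.image g ∪ 𝓐.filter (fun a => g a ∈ 𝓐) ≠ 𝓐) :
    ∑ a ∈ 𝓐, w a < ∑ a ∈ 𝓐.image g ∪ 𝓐.filter (fun a => g a ∈ 𝓐), w a := by
  set S := 𝓐.filter (fun a => g a ∈ 𝓐)
  set T := 𝓐.filter (fun a => g a ∉ 𝓐)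
  have hT_moved : ∀ a ∈ T, g a ≠ a := fun a ha h =>
    (mem_filter.1 ha).2 (h.symm ▸ (mem_filter.1 ha).1)
  have hsplit : 𝓐.image g ∪ S = S ∪ T.image g := by
    ext b
    simp only [S, T, mem_union, mem_image, mem_filter]
    constructor
    · rintro (⟨a, ha, rfl⟩ | hb)
      · by_cases hga : g a ∈ 𝓐
        · exact Or.inl ⟨hga, (hidem a).symm ▸ hga⟩
        · exact Or.inr ⟨a, ⟨ha, hga⟩, rfl⟩
      · exact Or.inl hb
    · rintro (hb | ⟨a, ⟨ha, -⟩, rfl⟩)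
      · exact Or.inr hb
      · exact Or.inl ⟨a, ha, rfl⟩
  have hT : T.Nonempty := by
    by_contra! hT
    apply hne
    rw [hsplit, hT, image_empty, union_empty, filter_eq_self]
    simpa using filter_eq_empty_iff.1 hT
  have hdisj : Disjoint S (T.image g) := by
    rw [disjoint_right]
    rintro _ hb hb'
    obtain ⟨a, ha, rfl⟩ := mem_image.1 hb
    exact (mem_filter.1 ha).2 (mem_filter.1 hb').1
  calc ∑ a ∈ 𝓐, w a = ∑ a ∈ S, w a + ∑ a ∈ T, w a :=
        (sum_filter_add_sum_filter_not _ _ _).symm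
    _ < ∑ a ∈ S, w a + ∑ a ∈ T, w (g a) :=
        add_lt_add_right (sum_lt_sum_of_nonempty hT fun a ha => hw a (hT_moved a ha)) _
    _ = ∑ a ∈ 𝓐.image g ∪ S, w a := by
        rw [hsplit, sum_union hdisj,
          sum_image fun a ha b hb => hinj (hT_moved a ha) (hT_moved b hb)]

end Compression

section SetUvf

variable {U A : Finset ℕ} {v : ℕ} {f : ℕ → ℕ}

theorem mem_setUvf_self : v ∈ setUvf U v f A := by
  unfold setUvf; split_ifs with h <;> simp [h]

theorem setUvf_of_mem (h : v ∈ A) : setUvf U v f A = A := if_pos h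

theorem setUvf_setUvf : setUvf U v f (setUvf U v f A) = setUvf U v f A :=
  setUvf_of_mem mem_setUvf_self

theorem setUvf_ne_self_iff : setUvf U v f A ≠ A ↔ v ∉ A :=
  ⟨fun h hv => h (setUvf_of_mem hv), fun hv h => hv (h ▸ mem_setUvf_self)⟩

theorem mem_setUvf_iff (hmaps : ∀ x ∈ U, f x ∈ U) (hinv : ∀ x ∈ U, f (f x) = x) (hA : v ∉ A)
    {x : ℕ} : x ∈ setUvf U v f A ↔ x = v ∨ (x ∈ U ∧ f x ∈ A) ∨ (x ∈ A ∧ x ∉ U) := by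
  simp only [setUvf, if_neg hA, mem_union, mem_image, mem_inter, mem_singleton, mem_sdiff]
  constructor
  · rintro ((⟨a, ⟨ha, haU⟩, rfl⟩ | rfl) | h)
    · exact Or.inr (Or.inl ⟨hmaps a haU, (hinv a haU).symm ▸ ha⟩)
    · exact Or.inl rfl
    · exact Or.inr (Or.inr h)
  · rintro (rfl | ⟨hxU, hfx⟩ | h)
    · exact Or.inl (Or.inr rfl)
    · exact Or.inl (Or.inl ⟨f x, ⟨hfx, hmaps x hxU⟩, hinv x hxU⟩)
    · exact Or.inr h

theorem setUvf_injOn (hmaps : ∀ x ∈ U, f x ∈ U) (hinv : ∀ x ∈ U, f (f x) = x) (hvU : v ∉ U) :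
    Set.InjOn (setUvf U v f) {A | v ∉ A} := by
  intro A hA B hB h
  have hrecover : ∀ {C : Finset ℕ}, v ∉ C → ∀ x,
      x ∈ C ↔ x ≠ v ∧ (if x ∈ U then f x else x) ∈ setUvf U v f C := by
    intro C hC x
    rw [mem_setUvf_iff hmaps hinv hC]
    by_cases hxU : x ∈ U
    · have hfxv : f x ≠ v := fun e => hvU (e ▸ hmaps x hxU)
      simp only [if_pos hxU, hinv x hxU, hmaps x hxU, hfxv]
      grind
    · simp only [if_neg hxU]
      grind
  ext x
  rw [hrecover hA, hrecover hB, h]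

theorem card_setUvf (hmaps : ∀ x ∈ U, f x ∈ U) (hinv : ∀ x ∈ U, f (f x) = x) (hvU : v ∉ U)
    (hA : v ∉ A) : (setUvf U v f A).card = A.card + 1 := by
  have hinj : Set.InjOn f U := fun a ha b hb h => by rw [← hinv a ha, h, hinv b hb]
  have himage_sub : (A ∩ U).image f ⊆ U :=
    image_subset_iff.2 fun a ha => hmaps a (mem_inter.1 ha).2
  have hdisj₁ : Disjoint ((A ∩ U).image f) {v} :=
    disjoint_singleton_right.2 fun h => hvU (himage_sub h)
  have hdisj₂ : Disjoint ((A ∩ U).image f ∪ {v}) (A \ U) := by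
    refine disjoint_union_left.2 ⟨?_, disjoint_singleton_left.2 fun h => hA (mem_sdiff.1 h).1⟩
    exact disjoint_of_subset_left himage_sub disjoint_sdiff
  rw [setUvf, if_neg hA, card_union_of_disjoint hdisj₂, card_union_of_disjoint hdisj₁,
    card_image_of_injOn (hinj.mono inter_subset_right), card_singleton,
    ← card_inter_add_card_sdiff A U]
  ring

end SetUvf

theorem stmt17_general (𝓐 : Finset (Finset ℕ))
    (U : Finset ℕ)
    (v : ℕ) (hvU : v ∉ U)
    (f : ℕ → ℕ) (hf : IsPairing f U)
    (hne : famUvf U v f 𝓐 ≠ 𝓐) :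
    ∑ A ∈ 𝓐, A.card < ∑ A ∈ famUvf U v f 𝓐, A.card := by
  obtain ⟨hmaps, hinv, -⟩ := hf
  refine sum_lt_sum_image_union_filter (fun _ => setUvf_setUvf)
    ((setUvf_injOn hmaps hinv hvU).mono fun _ => setUvf_ne_self_iff.1) (fun A hA => ?_) hne
  rw [card_setUvf hmaps hinv hvU (setUvf_ne_self_iff.1 hA)]
  exact Nat.lt_succ_self _

theorem stmt17 (n : ℕ) (𝓐 : Finset (Finset ℕ)) (h𝓐 : 𝓐 ⊆ (Finset.Icc 1 n).powerset)
    (U : Finset ℕ) (hU : U ⊆ Finset.Icc 1 n) (hUeven : Even U.card)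
    (v : ℕ) (hv : v ∈ Finset.Icc 1 n) (hvU : v ∉ U)
    (f : ℕ → ℕ) (hf : IsPairing f U)
    (hne : famUvf U v f 𝓐 ≠ 𝓐) :
    ∑ A ∈ 𝓐, A.card < ∑ A ∈ famUvf U v f 𝓐, A.card :=
  stmt17_general 𝓐 U v hvU f hf hne
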